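/- There exists a constant C₀ > 0 such that for every integer r ≥ 1 and every integer α ≥ 0, ∑_{p > α·r²} (h(p)/h(1))·(p/(r+1)³)·(1 − (r+1)^{−2})^{p−1} ≤ C₀·e^{−α/5}. -/

import Mathlib

noncomputable def hfun (k : ℕ) : ℝ := (Nat.choose (2 * k) k : ℝ) / 4 ^ k

/-!
Since `h p ^ 2 ≤ 1 / (p + 1)`, the `p`-th term is at most `2 √p (1 - R⁻²) ^ (p - 1) / R³`
with `R = r + 1`. Absorbing `√p ≤ (8 R / 5) e^{p / (5 R²)}` into the exponential leaves a geometric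
sequence of ratio `e^{-4 / (5 R²)}` and prefactor at most `5 / R²`, whose tail beyond `α r²`
is at most `8 e^{-4 α r² / (5 R²)} ≤ 8 e^{-α / 5}`, as `R ≤ 2 r`.
-/

open Real

lemma hfun_nonneg (k : ℕ) : 0 ≤ hfun k := by unfold hfun; positivity

lemma hfun_one : hfun 1 = 1 / 2 := by norm_num [hfun]

lemma hfun_succ (k : ℕ) : hfun (k + 1) = (2 * k + 1) / (2 * k + 2) * hfun k := by
  have h : ((k + 1 : ℕ) : ℝ) * Nat.centralBinom (k + 1) = 2 * (2 * k + 1) * Nat.centralBinom k := by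
    exact_mod_cast Nat.succ_mul_centralBinom_succ k
  simp only [hfun, ← Nat.centralBinom_eq_two_mul_choose]
  push_cast at h
  rw [pow_succ]
  field_simp
  linear_combination 2 * h

lemma hfun_sq_mul_le_one (k : ℕ) : hfun k ^ 2 * (k + 1) ≤ 1 := by
  induction k with
  | zero => simp [hfun]
  | succ k ih =>
    have hratio : ((2 * k + 1) / (2 * k + 2) : ℝ) ^ 2 * (k + 2) ≤ k + 1 := by
      rw [div_pow, div_mul_eq_mul_div, div_le_iff₀ (by positivity)]
      nlinarith
    calc hfun (k + 1) ^ 2 * ((k + 1 : ℕ) + 1)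
        = ((2 * k + 1) / (2 * k + 2) : ℝ) ^ 2 * (k + 2) * hfun k ^ 2 := by
          rw [hfun_succ]; push_cast; ring
      _ ≤ (k + 1) * hfun k ^ 2 := by gcongr
      _ ≤ 1 := by linarith

lemma natCast_mul_hfun_le_sqrt (k : ℕ) : k * hfun k ≤ √k := by
  have hk : (0 : ℝ) ≤ k := k.cast_nonneg
  apply Real.le_sqrt_of_sq_le
  have := hfun_sq_mul_le_one k
  have : 0 ≤ hfun k ^ 2 := sq_nonneg _
  nlinarith

lemma Real.sqrt_le_sqrt_mul_exp {a : ℝ} (ha : 0 < a) (x : ℝ) : √x ≤ √a * exp (x / (2 * a)) := by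
  rw [Real.sqrt_le_left (by positivity), mul_pow, Real.sq_sqrt ha.le, ← Real.exp_nat_mul]
  calc x = a * (x / a) := by field_simp
    _ ≤ a * exp (x / a) := by gcongr; linarith [Real.add_one_le_exp (x / a)]
    _ = _ := by congr 2; field_simp; ring

lemma Real.div_one_add_le_one_sub_exp_neg {x : ℝ} (hx : 0 ≤ x) : x / (1 + x) ≤ 1 - exp (-x) := by
  have h : exp (-x) ≤ 1 / (1 + x) := by
    rw [Real.exp_neg, ← one_div]
    exact one_div_le_one_div_of_le (by linarith) (by linarith [Real.add_one_le_exp x])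
  have : x / (1 + x) = 1 - 1 / (1 + x) := by field_simp; ring
  linarith

lemma perimeter_summand_nonneg {R : ℝ} (hR : 1 ≤ R) (p : ℕ) :
    0 ≤ (hfun p / hfun 1) * ((p : ℝ) / R ^ 3) * (1 - R ^ (-2 : ℤ)) ^ (p - 1) := by
  have hq : 0 ≤ 1 - R ^ (-2 : ℤ) := sub_nonneg.mpr (zpow_le_one_of_nonpos₀ hR (by norm_num))
  have hp := hfun_nonneg p
  have h1 := hfun_nonneg 1
  positivity

lemma perimeter_summand_le {R : ℝ} (hR : 2 ≤ R) (p : ℕ) :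
    (hfun p / hfun 1) * ((p : ℝ) / R ^ 3) * (1 - R ^ (-2 : ℤ)) ^ (p - 1) ≤
      5 / R ^ 2 * exp (-(4 / (5 * R ^ 2))) ^ p := by
  obtain rfl | hp := p.eq_zero_or_pos
  · simp only [pow_zero, mul_one, CharP.cast_eq_zero, zero_div, mul_zero, zero_mul]; positivity
  set c : ℝ := 1 / R ^ 2 with hc
  have hzpow : R ^ (-2 : ℤ) = c := by rw [zpow_neg, zpow_ofNat, hc, one_div]
  have hc4 : c ≤ 1 / 4 := by rw [hc]; gcongr; nlinarith
  have hq : 0 ≤ 1 - c := by linarith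
  have hsqrt : √p ≤ 8 / 5 * R * exp (c * p / 5) := by
    have hsq : √(5 * R ^ 2 / 2) ≤ 8 / 5 * R := by
      rw [Real.sqrt_le_left (by positivity)]; nlinarith
    calc √p ≤ √(5 * R ^ 2 / 2) * exp (p / (2 * (5 * R ^ 2 / 2))) :=
          Real.sqrt_le_sqrt_mul_exp (by positivity) _
      _ ≤ 8 / 5 * R * exp (c * p / 5) := by
          rw [show p / (2 * (5 * R ^ 2 / 2)) = c * p / 5 by rw [hc]; ring]; gcongr
  have hpow : (1 - c) ^ (p - 1) ≤ 4 / 3 * exp (-c) ^ p := by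
    have h1 : (1 - c) ^ (p - 1) * (1 - c) = (1 - c) ^ p := by
      rw [← pow_succ, Nat.sub_add_cancel hp]
    have h2 : (1 - c) ^ p ≤ exp (-c) ^ p :=
      pow_le_pow_left₀ hq (Real.one_sub_le_exp_neg c) p
    have h3 : 0 ≤ (1 - c) ^ (p - 1) := pow_nonneg hq _
    nlinarith [pow_nonneg (exp_pos (-c)).le p]
  have hexp : exp (c * p / 5) * exp (-c) ^ p = exp (-(4 / (5 * R ^ 2))) ^ p := by
    rw [← Real.exp_nat_mul, ← Real.exp_nat_mul, ← Real.exp_add, hc]; ring_nf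
  calc (hfun p / hfun 1) * ((p : ℝ) / R ^ 3) * (1 - R ^ (-2 : ℤ)) ^ (p - 1)
      = 2 / R ^ 3 * (p * hfun p) * (1 - c) ^ (p - 1) := by rw [hzpow, hfun_one]; ring
    _ ≤ 2 / R ^ 3 * (8 / 5 * R * exp (c * p / 5)) * (4 / 3 * exp (-c) ^ p) := by
      have := (natCast_mul_hfun_le_sqrt p).trans hsqrt
      gcongr
    _ = 64 / 15 / R ^ 2 * exp (-(4 / (5 * R ^ 2))) ^ p := by
      rw [← hexp]; field_simp; ring
    _ ≤ 5 / R ^ 2 * exp (-(4 / (5 * R ^ 2))) ^ p := by gcongr; norm_num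

lemma summable_tail_and_tsum_le_of_le_geometric {f : ℕ → ℝ} {K ρ : ℝ} (N : ℕ)
    (hρ0 : 0 ≤ ρ) (hρ1 : ρ < 1) (hf0 : ∀ p, N < p → 0 ≤ f p)
    (hf : ∀ p, N < p → f p ≤ K * ρ ^ p) :
    Summable (fun p => if N < p then f p else 0) ∧
      ∑' p, (if N < p then f p else 0) ≤ K * ρ ^ (N + 1) / (1 - ρ) := by
  set F : ℕ → ℝ := fun p => if N < p then f p else 0
  have hshift : ∀ i, F (i + (N + 1)) = f (i + (N + 1)) := fun i => if_pos (by omega)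
  have hle : ∀ i, F (i + (N + 1)) ≤ K * ρ ^ (N + 1) * ρ ^ i := fun i => by
    rw [hshift, mul_assoc, ← pow_add, add_comm (N + 1)]; exact hf _ (by omega)
  have hgeom : Summable fun i => K * ρ ^ (N + 1) * ρ ^ i :=
    (summable_geometric_of_lt_one hρ0 hρ1).mul_left _
  have hsumShift : Summable fun i => F (i + (N + 1)) :=
    hgeom.of_nonneg_of_le (fun i => by rw [hshift]; exact hf0 _ (by omega)) hle
  have hsum : Summable F := (summable_nat_add_iff (N + 1)).mp hsumShift
  have hhead : ∑ i ∈ Finset.range (N + 1), F i = 0 :=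
    Finset.sum_eq_zero fun i hi => if_neg (by simp at hi; omega)
  refine ⟨hsum, ?_⟩
  calc ∑' p, F p = ∑' i, F (i + (N + 1)) := by
        rw [← hsum.sum_add_tsum_nat_add (N + 1), hhead, zero_add]
    _ ≤ ∑' i, K * ρ ^ (N + 1) * ρ ^ i := hsumShift.tsum_le_tsum hle hgeom
    _ = K * ρ ^ (N + 1) / (1 - ρ) := by
        rw [tsum_mul_left, tsum_geometric_of_lt_one hρ0 hρ1, div_eq_mul_inv]

lemma geometric_tail_le {R : ℝ} (hR : 2 ≤ R) (N : ℕ) :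
    5 / R ^ 2 * exp (-(4 / (5 * R ^ 2))) ^ (N + 1) / (1 - exp (-(4 / (5 * R ^ 2)))) ≤
      8 * exp (-(4 / (5 * R ^ 2))) ^ N := by
  set x : ℝ := 4 / (5 * R ^ 2) with hx
  have hx0 : 0 < x := by positivity
  have hx1 : x ≤ 1 / 5 := by rw [hx, div_le_iff₀ (by positivity)]; nlinarith
  have hgap : x / (1 + x) ≤ 1 - exp (-x) := Real.div_one_add_le_one_sub_exp_neg hx0.le
  have hρ : exp (-x) ^ (N + 1) ≤ exp (-x) ^ N :=
    pow_le_pow_of_le_one (exp_pos _).le (exp_le_one_iff.mpr (by linarith)) N.le_succ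
  calc 5 / R ^ 2 * exp (-x) ^ (N + 1) / (1 - exp (-x))
      ≤ 5 / R ^ 2 * exp (-x) ^ N / (x / (1 + x)) := by gcongr
    _ = 25 / 4 * (1 + x) * exp (-x) ^ N := by rw [hx]; field_simp; ring
    _ ≤ 8 * exp (-x) ^ N := by gcongr; linarith

/-- There is C₀ > 0 such that for every r ≥ 1 and integer α ≥ 0, the tail sum
∑_{p > α·r²} (h(p)/h(1))·(p/(r+1)³)·(1 − (r+1)^{−2})^{p−1} converges and is
bounded above by C₀·e^{−α/5}. -/
theorem perimeter_tail_bound :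
    ∃ C₀ : ℝ, 0 < C₀ ∧ ∀ r : ℕ, 1 ≤ r → ∀ α : ℕ,
      (Summable fun p : ℕ =>
        if α * r ^ 2 < p then
          (hfun p / hfun 1) * ((p : ℝ) / ((r : ℝ) + 1) ^ 3) *
            (1 - ((r : ℝ) + 1) ^ (-2 : ℤ)) ^ (p - 1)
        else 0) ∧
      (∑' p : ℕ,
          if α * r ^ 2 < p then
            (hfun p / hfun 1) * ((p : ℝ) / ((r : ℝ) + 1) ^ 3) *
              (1 - ((r : ℝ) + 1) ^ (-2 : ℤ)) ^ (p - 1)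
          else 0) ≤
        C₀ * Real.exp (-(α : ℝ) / 5) := by
  refine ⟨8, by norm_num, fun r hr α => ?_⟩
  have hr1 : (1 : ℝ) ≤ r := by exact_mod_cast hr
  have hR : (2 : ℝ) ≤ r + 1 := by linarith
  obtain ⟨hsum, htsum⟩ := summable_tail_and_tsum_le_of_le_geometric (α * r ^ 2)
    (exp_pos _).le (exp_lt_one_iff.mpr (neg_neg_of_pos (by positivity)))
    (fun p _ => perimeter_summand_nonneg (by linarith) p) (fun p _ => perimeter_summand_le hR p)
  refine ⟨hsum, htsum.trans ((geometric_tail_le hR _).trans ?_)⟩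
  rw [← exp_nat_mul]
  gcongr
  rw [neg_div, mul_neg, neg_le_neg_iff, Nat.cast_mul, Nat.cast_pow, mul_div_assoc',
    le_div_iff₀ (by positivity)]
  have hsq : ((r : ℝ) + 1) ^ 2 ≤ 4 * r ^ 2 := by nlinarith
  nlinarith [mul_le_mul_of_nonneg_left hsq α.cast_nonneg]
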